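/- Let X be a complete decomposition space and let v, v' be words over {0,1,a} of lengths m and n. Then the following square is a pullback of sets: top map X_{vv'} → X_2, the restriction of the map X_{m+n} → X_2 induced by the generic map [2] → [m+n] with 0 ↦ 0, 1 ↦ m, 2 ↦ m+n; right map (d_2, d_0) : X_2 → X_1 × X_1; bottom map X_v × X_{v'} → X_1 × X_1, the product of the two long-edge maps; left map X_{vv'} → X_v × X_{v'}, induced by the two free maps [m] → [m+n] (initial segment) and [n] → [m+n] (final segment). -/

import Mathlib

open CategoryTheory CategoryTheory.Limits Simplicial Opposite

/-- A map in the simplex category is *generic* if it preserves the endpoints. -/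
def IsGeneric {a b : SimplexCategory} (g : a ⟶ b) : Prop :=
  g.toOrderHom 0 = 0 ∧ g.toOrderHom (Fin.last a.len) = Fin.last b.len

/-- A map in the simplex category is *free* if it is distance preserving. -/
def IsFree {a b : SimplexCategory} (f : a ⟶ b) : Prop :=
  ∀ i : Fin (a.len + 1), (f.toOrderHom i : ℕ) = (f.toOrderHom 0 : ℕ) + (i : ℕ)

/-- A decomposition space is a simplicial set carrying every pushout in `Δ` of a
generic map `g` along a free map `f` to a pullback of sets. -/
def IsDecomposition (X : SSet) : Prop :=
  ∀ ⦃a b c d : SimplexCategory⦄ (g : a ⟶ b) (f : a ⟶ c) (h : b ⟶ d) (k : c ⟶ d),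
    IsGeneric g → IsFree f → IsPushout g f h k →
    IsPullback (X.map h.op) (X.map k.op) (X.map g.op) (X.map f.op)

/-- A simplicial set is *complete* if all degeneracy maps are injective. -/
def Complete (X : SSet) : Prop :=
  ∀ (n : ℕ) (i : Fin (n + 1)), Function.Injective (X.σ i : X _⦋n⦌ ⟶ X _⦋n + 1⦌)

/-- The free map `[1] → [n]` sending `0, 1` to `i, i+1`; it induces the map
taking the `i`-th principal edge (`0`-indexed) of an `n`-simplex. -/
def principalEdge (n : ℕ) (i : Fin n) : (⦋1⦌ : SimplexCategory) ⟶ ⦋n⦌ :=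
  SimplexCategory.mkHom
    { toFun := fun j => ⟨i.1 + j.1, by have := i.2; have := j.2; omega⟩
      monotone' := fun a b h => by
        simp only [Fin.mk_le_mk]
        exact Nat.add_le_add_left h i.1 }

/-- The unique generic map `[1] → [n]` (`0 ↦ 0`, `1 ↦ n`); it induces the map
taking the long edge of an `n`-simplex. -/
def longEdgeMap (n : ℕ) : (⦋1⦌ : SimplexCategory) ⟶ ⦋n⦌ :=
  SimplexCategory.mkHom
    { toFun := fun j => ⟨j.1 * n, by
        have h := j.2
        have : j.1 * n ≤ 1 * n := Nat.mul_le_mul_right n (by omega)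
        omega⟩
      monotone' := fun a b h => by
        simp only [Fin.mk_le_mk]
        exact Nat.mul_le_mul_right n h }

/-- The alphabet `{0, 1, a}`: `z` prescribes a degenerate principal edge, `o` an
unrestricted one, `a` a nondegenerate one. -/
inductive Letter where
  | z
  | o
  | a
  deriving DecidableEq

/-- The subset of `X₁` prescribed by a letter. -/
def edgeSet (X : SSet) (l : Letter) : Set (X _⦋1⦌) := match l with
  | .z => Set.range (X.σ (0 : Fin 1))
  | .o => Set.univ
  | .a => (Set.range (X.σ (0 : Fin 1)))ᶜ

/-- `X_w`, the set of `n`-simplices whose principal edges have the types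
prescribed by the word `w`. -/
def wordSet (X : SSet) {n : ℕ} (w : Fin n → Letter) : Set (X _⦋n⦌) :=
  {σ | ∀ i : Fin n, X.map (principalEdge n i).op σ ∈ edgeSet X (w i)}

/-- A simplex is *effective* if all its principal edges are nondegenerate. -/
def Effective (X : SSet) {n : ℕ} (σ : X _⦋n⦌) : Prop :=
  ∀ i : Fin n, X.map (principalEdge n i).op σ ∉ Set.range (X.σ (0 : Fin 1))

/-- The constant word `aa⋯a`. -/
def allA (n : ℕ) : Fin n → Letter := fun _ => Letter.a

/-- Concatenation of words. -/
def concatW {m n : ℕ} (v : Fin m → Letter) (v' : Fin n → Letter) : Fin (m + n) → Letter :=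
  fun i => if h : i.1 < m then v ⟨i.1, h⟩ else v' ⟨i.1 - m, by have := i.2; omega⟩

/-- The word `v ℓ v'` obtained by splicing a letter `ℓ` between the words `v` and `v'`. -/
def splice {m n : ℕ} (v : Fin m → Letter) (l : Letter) (v' : Fin n → Letter) :
    Fin (m + n + 1) → Letter :=
  fun i => if h : i.1 < m then v ⟨i.1, h⟩
    else if h2 : i.1 = m then l
    else v' ⟨i.1 - (m + 1), by have := i.2; omega⟩

/-- A simplex (of positive dimension) is degenerate if it is in the image of some
degeneracy map. -/
def Degen (X : SSet) {n : ℕ} (σ : X _⦋n + 1⦌) : Prop :=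
  ∃ i : Fin (n + 1), σ ∈ Set.range (X.σ i)

/-- A simplicial map is *cULF* if its naturality squares on all generic maps are
pullbacks. -/
def IsCULF {Y X : SSet} (f : Y ⟶ X) : Prop :=
  ∀ ⦃a b : SimplexCategory⦄ (g : a ⟶ b), IsGeneric g →
    IsPullback (f.app (op b)) (Y.map g.op) (X.map g.op) (f.app (op a))

/-- A simplicial map is *conservative* if its naturality squares on all degeneracy
maps are pullbacks. -/
def Conservative {Y X : SSet} (f : Y ⟶ X) : Prop :=
  ∀ (n : ℕ) (i : Fin (n + 1)),
    IsPullback (f.app (op (SimplexCategory.mk n))) (Y.σ i) (X.σ i)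
      (f.app (op (SimplexCategory.mk (n + 1))))

/-- A simplicial set is *stiff* if it carries every pushout in `Δ` of a codegeneracy
map along a free map to a pullback of sets. -/
def Stiff (X : SSet) : Prop :=
  ∀ (k : ℕ) (i : Fin (k + 1)) ⦃c d : SimplexCategory⦄
    (f : SimplexCategory.mk (k + 1) ⟶ c) (h : SimplexCategory.mk k ⟶ d) (j : c ⟶ d),
    IsFree f → IsPushout (SimplexCategory.σ i) f h j →
    IsPullback (X.map h.op) (X.map j.op) (X.map (SimplexCategory.σ i).op) (X.map f.op)

/-- The map `[0] → [n]` picking out the vertex `i`. -/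
def vertexMap (n : ℕ) (i : Fin (n + 1)) : (⦋0⦌ : SimplexCategory) ⟶ ⦋n⦌ :=
  SimplexCategory.mkHom ⟨fun _ => i, fun _ _ _ => le_refl _⟩

/-- The unique map `[n] → [0]`; it induces the iterated degeneracy `X₀ → Xₙ`. -/
def toZero (n : ℕ) : (⦋n⦌ : SimplexCategory) ⟶ ⦋0⦌ :=
  SimplexCategory.mkHom ⟨fun _ => 0, fun _ _ _ => le_refl _⟩

/-- The generic map `[2] → [m+n]` sending `0,1,2` to `0,m,m+n`. -/
def midMap (m n : ℕ) : (⦋2⦌ : SimplexCategory) ⟶ ⦋m + n⦌ :=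
  SimplexCategory.mkHom
    { toFun := fun j => ⟨if j.1 = 0 then 0 else if j.1 = 1 then m else m + n, by
        split
        · omega
        · split <;> omega⟩
      monotone' := by
        intro a b hab
        have h : a.1 ≤ b.1 := hab
        have ha := a.2
        have hb := b.2
        simp only [Fin.mk_le_mk]
        split <;> split <;> (try split) <;> (try split) <;> omega }

/-- The free map `[m] → [m+n]` onto the initial segment. -/
def freeInitial (m n : ℕ) : (⦋m⦌ : SimplexCategory) ⟶ ⦋m + n⦌ :=
  SimplexCategory.mkHom ⟨fun i => ⟨i.1, by have := i.2; omega⟩, fun a b h => h⟩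

/-- The free map `[n] → [m+n]` onto the final segment. -/
def freeFinal (m n : ℕ) : (⦋n⦌ : SimplexCategory) ⟶ ⦋m + n⦌ :=
  SimplexCategory.mkHom ⟨fun i => ⟨m + i.1, by have := i.2; omega⟩,
    fun a b h => by
      simp only [Fin.mk_le_mk]
      exact Nat.add_le_add_left h m⟩

/-- The word `1aa⋯a` (`n` letters `a`). -/
def oneA (n : ℕ) : Fin (n + 1) → Letter := fun i => if i.1 = 0 then Letter.o else Letter.a

/-- The word `0aa⋯a` (`n` letters `a`). -/
def zeroA (n : ℕ) : Fin (n + 1) → Letter := fun i => if i.1 = 0 then Letter.z else Letter.a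

/-- The word `aa⋯a1` (`n` letters `a`). -/
def aOne (n : ℕ) : Fin (n + 1) → Letter := fun i => if i.1 = n then Letter.o else Letter.a

/-- The word `aa⋯a0` (`n` letters `a`). -/
def aZero (n : ℕ) : Fin (n + 1) → Letter := fun i => if i.1 = n then Letter.z else Letter.a

/-- The number of letters `0` in a word. -/
def zcount {n : ℕ} (w : Fin n → Letter) : ℕ :=
  (Finset.univ.filter fun i => w i = Letter.z).card

/-- The surjection `[n] → [n - zcount w]` collapsing, for each position `j` with
`w j = 0`, the vertex `j+1` onto the vertex `j`; the induced map
`X_{n - zcount w} → X_n` is the iterated degeneracy `s_{j_k} ⋯ s_{j_1}` where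
`j_1 < ⋯ < j_k` are the positions of the letters `0` of `w`. -/
def collapseMap {n : ℕ} (w : Fin n → Letter) :
    (⦋n⦌ : SimplexCategory) ⟶ ⦋n - zcount w⦌ :=
  SimplexCategory.mkHom
    { toFun := fun t =>
        ⟨(Finset.univ.filter fun i : Fin n => i.1 < t.1 ∧ ¬ (w i = Letter.z)).card, by
          have h2 := Finset.card_filter_add_card_filter_not
            (s := (Finset.univ : Finset (Fin n))) (p := fun i => w i = Letter.z)
          have h1 : (Finset.univ.filter fun i : Fin n => i.1 < t.1 ∧ ¬ (w i = Letter.z)).card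
              ≤ (Finset.univ.filter fun i : Fin n => ¬ (w i = Letter.z)).card :=
            Finset.card_le_card (fun x hx => by
              simp only [Finset.mem_filter] at hx ⊢
              exact ⟨hx.1, hx.2.2⟩)
          have h3 : zcount w = (Finset.univ.filter fun i : Fin n => w i = Letter.z).card := rfl
          simp only [Finset.card_univ, Fintype.card_fin] at h2
          omega⟩
      monotone' := by
        intro a b hab
        have h : a.1 ≤ b.1 := hab
        simp only [Fin.mk_le_mk]
        exact Finset.card_le_card (fun x hx => by
          simp only [Finset.mem_filter] at hx ⊢
          exact ⟨hx.1, lt_of_lt_of_le hx.2.1 h, hx.2.2⟩) }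

/-- An edge has finite length if there is a bound on the dimensions of the effective
simplices having it as long edge. -/
def FiniteLength (X : SSet) (a : X _⦋1⦌) : Prop :=
  ∃ N : ℕ, ∀ (n : ℕ) (σ : X _⦋n⦌), Effective X σ →
    X.map (longEdgeMap n).op σ = a → n ≤ N

/-- A *tight* decomposition space: a complete decomposition space in which every edge
has finite length. -/
def Tight (X : SSet) : Prop :=
  IsDecomposition X ∧ Function.Injective (X.σ (0 : Fin 1) : X _⦋0⦌ ⟶ X _⦋1⦌) ∧
    ∀ a : X _⦋1⦌, FiniteLength X a

/-- The length of an edge: the supremum of the dimensions of effective simplices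
having it as long edge. -/
noncomputable def edgeLength (X : SSet) (a : X _⦋1⦌) : ℕ :=
  sSup (setOf fun n : ℕ => ∃ σ : X _⦋n⦌, Effective X σ ∧ X.map (longEdgeMap n).op σ = a)

/-- A complete simplicial set is *split* if all face maps preserve nondegenerate
simplices. -/
def Split (X : SSet) : Prop :=
  Complete X ∧ ∀ (n : ℕ) (i : Fin (n + 3)) (σ : X _⦋n + 2⦌),
    ¬ Degen X σ → ¬ Degen X (X.δ i σ)

/-- The counit: the indicator function of the degenerate edges. -/
noncomputable def epsFun (X : SSet) : X _⦋1⦌ → ℚ := fun f =>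
  haveI := Classical.propDecidable (f ∈ Set.range (X.σ (0 : Fin 1)))
  if f ∈ Set.range (X.σ (0 : Fin 1)) then 1 else 0

/-- Convolution product on `ℚ`-valued functions on `X₁`. -/
noncomputable def convFun (X : SSet) (φ ψ : X _⦋1⦌ → ℚ) : X _⦋1⦌ → ℚ :=
  fun f => ∑ᶠ σ ∈ (fun τ => X.δ (1 : Fin 3) τ) ⁻¹' {f},
    φ (X.δ (2 : Fin 3) σ) * ψ (X.δ (0 : Fin 3) σ)

/-- The Möbius function `Φ_even - Φ_odd`. -/
noncomputable def muFun (X : SSet) : X _⦋1⦌ → ℚ :=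
  fun f => ∑ᶠ n : ℕ, (-1 : ℚ) ^ n *
    (Nat.card {σ : X.obj (op (SimplexCategory.mk n)) // Effective X σ ∧ X.map (longEdgeMap n).op σ = f} : ℚ)

/-- The category `Δ_inj`: objects those of the simplex category, morphisms the
injective monotone maps. -/
structure DeltaInj : Type where
  /-- the underlying object of the simplex category -/
  obj : SimplexCategory

instance : Category DeltaInj where
  Hom a b := {f : a.obj ⟶ b.obj // Function.Injective f.toOrderHom}
  id a := ⟨𝟙 a.obj, by
    rw [SimplexCategory.id_toOrderHom]
    exact fun x y h => h⟩
  comp f g := ⟨f.1 ≫ g.1, by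
    rw [SimplexCategory.comp_toOrderHom]
    exact fun x y h => f.2 (g.2 h)⟩
  id_comp f := by apply Subtype.ext; simp
  comp_id f := by apply Subtype.ext; simp
  assoc f g h := by apply Subtype.ext; simp

/-- The inclusion functor `Δ_inj ⊆ Δ`. -/
def DeltaInj.incl : DeltaInj ⥤ SimplexCategory where
  obj a := a.obj
  map f := f.1

/-- A *semi-decomposition space*: a semi-simplicial set carrying every pushout in
`Δ_inj` of a generic (inner) face map along a free (outer) face map to a pullback. -/
def IsSemiDecomposition (Z : DeltaInjᵒᵖ ⥤ Type) : Prop :=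
  ∀ ⦃a b c d : DeltaInj⦄ (g : a ⟶ b) (f : a ⟶ c) (h : b ⟶ d) (k : c ⟶ d),
    IsGeneric g.1 → IsFree f.1 → IsPushout g f h k →
    IsPullback (Z.map h.op) (Z.map k.op) (Z.map g.op) (Z.map f.op)

/-- A map of semi-simplicial sets is *ULF* if its naturality squares on all generic
face maps are pullbacks. -/
def IsULF {Z W : DeltaInjᵒᵖ ⥤ Type} (φ : Z ⟶ W) : Prop :=
  ∀ ⦃a b : DeltaInj⦄ (g : a ⟶ b), IsGeneric g.1 →
    IsPullback (φ.app (op b)) (Z.map g.op) (W.map g.op) (φ.app (op a))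

lemma conservative_id (X : SSet) : Conservative (𝟙 X) := by
  intro n i
  exact IsPullback.of_horiz_isIso ⟨by simp⟩

lemma conservative_comp {X Y Z : SSet} {f : X ⟶ Y} {g : Y ⟶ Z}
    (hf : Conservative f) (hg : Conservative g) : Conservative (f ≫ g) := by
  intro n i
  simpa using IsPullback.paste_horiz (hf n i) (hg n i)

lemma isCULF_id (X : SSet) : IsCULF (𝟙 X) := by
  intro a b gm hgm
  exact IsPullback.of_horiz_isIso ⟨by simp⟩

lemma isCULF_comp {X Y Z : SSet} {f : X ⟶ Y} {g : Y ⟶ Z}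
    (hf : IsCULF f) (hg : IsCULF g) : IsCULF (f ≫ g) := by
  intro a b gm hgm
  simpa using IsPullback.paste_horiz (hf gm hgm) (hg gm hgm)

lemma isULF_id (Z : DeltaInjᵒᵖ ⥤ Type) : IsULF (𝟙 Z) := by
  intro a b gm hgm
  exact IsPullback.of_horiz_isIso ⟨by simp⟩

lemma isULF_comp {X Y Z : DeltaInjᵒᵖ ⥤ Type} {f : X ⟶ Y} {g : Y ⟶ Z}
    (hf : IsULF f) (hg : IsULF g) : IsULF (f ≫ g) := by
  intro a b gm hgm
  simpa using IsPullback.paste_horiz (hf gm hgm) (hg gm hgm)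

/-- The category of split simplicial sets and conservative maps. -/
structure SplitSSet : Type 1 where
  /-- the underlying simplicial set -/
  X : SSet.{0}
  split : Split X

instance : Category SplitSSet where
  Hom A B := {f : A.X ⟶ B.X // Conservative f}
  id A := ⟨𝟙 A.X, conservative_id A.X⟩
  comp f g := ⟨f.1 ≫ g.1, conservative_comp f.2 g.2⟩
  id_comp f := by apply Subtype.ext; simp
  comp_id f := by apply Subtype.ext; simp
  assoc f g h := by apply Subtype.ext; simp

/-- The forgetful functor from split simplicial sets to simplicial sets. -/
def SplitSSet.forget : SplitSSet ⥤ SSet where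
  obj A := A.X
  map f := f.1

/-- The category of split decomposition spaces and cULF maps. -/
structure SplitDecomp : Type 1 where
  /-- the underlying simplicial set -/
  X : SSet.{0}
  split : Split X
  decomp : IsDecomposition X

instance : Category SplitDecomp where
  Hom A B := {f : A.X ⟶ B.X // IsCULF f}
  id A := ⟨𝟙 A.X, isCULF_id A.X⟩
  comp f g := ⟨f.1 ≫ g.1, isCULF_comp f.2 g.2⟩
  id_comp f := by apply Subtype.ext; simp
  comp_id f := by apply Subtype.ext; simp
  assoc f g h := by apply Subtype.ext; simp

/-- The forgetful functor from split decomposition spaces to simplicial sets. -/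
def SplitDecomp.forget : SplitDecomp ⥤ SSet where
  obj A := A.X
  map f := f.1

/-- The category of semi-decomposition spaces and ULF maps. -/
structure SemiDecomp : Type 1 where
  /-- the underlying semi-simplicial set -/
  Z : DeltaInjᵒᵖ ⥤ Type
  semidecomp : IsSemiDecomposition Z

instance : Category SemiDecomp where
  Hom A B := {φ : A.Z ⟶ B.Z // IsULF φ}
  id A := ⟨𝟙 A.Z, isULF_id A.Z⟩
  comp f g := ⟨f.1 ≫ g.1, isULF_comp f.2 g.2⟩
  id_comp f := by apply Subtype.ext; simp
  comp_id f := by apply Subtype.ext; simp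
  assoc f g h := by apply Subtype.ext; simp

/-- The forgetful functor from semi-decomposition spaces to semi-simplicial sets. -/
def SemiDecomp.forget : SemiDecomp ⥤ (DeltaInjᵒᵖ ⥤ Type) where
  obj A := A.Z
  map f := f.1

/-!
Both `[m + 1]` (the long edge of `[m]` glued to the edge `01` of `[2]`) and `[m + n]` (the long
edge of `[n]` glued to the last edge of `[m + 1]`) are pushouts in `Δ` of a generic map along a free
one. The decomposition axiom therefore gives `X_{m+n} ≅ X_{m+1} ×_{X₁} X_n` and
`X_{m+1} ≅ X_m ×_{X₁} X₂`, which together say that an `(m + n)`-simplex is the same thing as a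
triangle together with an `m`- and an `n`-simplex filling its two short edges. The word conditions
come along for free, since the principal edges of an `(m + n)`-simplex are those of its initial
`m`-face followed by those of its final `n`-face.
-/

universe u

lemma CategoryTheory.Limits.Types.existsUnique_of_isPullback {P A B C : Type u}
    {fst : P ⟶ A} {snd : P ⟶ B} {f : A ⟶ C} {g : B ⟶ C} (h : IsPullback fst snd f g)
    {a : A} {b : B} (hab : f a = g b) : ∃! x : P, fst x = a ∧ snd x = b := by
  obtain ⟨x, hxa, hxb⟩ := Types.exists_of_isPullback h a b hab
  exact ⟨x, ⟨hxa, hxb⟩, fun y hy =>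
    Types.ext_of_isPullback h (hy.1.trans hxa.symm) (hy.2.trans hxb.symm)⟩

lemma map_op_comp_apply (X : SSet) {a b c : SimplexCategory} (f : a ⟶ b) (g : b ⟶ c)
    (x : X.obj (op c)) : X.map (f ≫ g).op x = X.map f.op (X.map g.op x) := by
  rw [op_comp, Functor.map_comp_apply]

@[simp]
lemma principalEdge_apply (n : ℕ) (i : Fin n) (j : Fin 2) :
    ((principalEdge n i).toOrderHom j : ℕ) = i + j := rfl

@[simp]
lemma longEdgeMap_apply (n : ℕ) (j : Fin 2) : ((longEdgeMap n).toOrderHom j : ℕ) = j * n := rfl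

@[simp]
lemma midMap_apply (m n : ℕ) (j : Fin 3) :
    ((midMap m n).toOrderHom j : ℕ) = if j.1 = 0 then 0 else if j.1 = 1 then m else m + n := rfl

@[simp]
lemma freeInitial_apply (m n : ℕ) (j : Fin (m + 1)) :
    ((freeInitial m n).toOrderHom j : ℕ) = j := rfl

@[simp]
lemma freeFinal_apply (m n : ℕ) (j : Fin (n + 1)) :
    ((freeFinal m n).toOrderHom j : ℕ) = m + j := rfl

lemma isFree_principalEdge (n : ℕ) (i : Fin n) : IsFree (principalEdge n i) := fun j => by
  simp

lemma isGeneric_longEdgeMap (n : ℕ) : IsGeneric (longEdgeMap n) :=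
  ⟨Fin.ext (by simp), Fin.ext (by simp)⟩

def subdivideEdge {b c d : ℕ} (p : Fin c) (hd : c + b = d + 1) : ⦋c⦌ ⟶ ⦋d⦌ :=
  SimplexCategory.mkHom
    { toFun := fun i : Fin (c + 1) =>
        ⟨if i.1 ≤ p.1 then i else i + b - 1, by split_ifs <;> omega⟩
      monotone' := fun i j hij => by
        change i.1 ≤ j.1 at hij
        change (ite _ _ _ : ℕ) ≤ ite _ _ _
        split_ifs <;> omega }

section EdgeSubdivision

variable {b c d : ℕ} {p : Fin c}

lemma toOrderHom_zero_eq_of_comp_eq {W : SimplexCategory} {u : ⦋b⦌ ⟶ W} {w : ⦋c⦌ ⟶ W}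
    (huw : longEdgeMap b ≫ u = principalEdge c p ≫ w) :
    u.toOrderHom 0 = w.toOrderHom p.castSucc := by
  have := congr(($huw).toOrderHom 0)
  simp only [SimplexCategory.comp_toOrderHom, OrderHom.comp_coe, Function.comp_apply] at this
  convert this using 2 <;> ext <;> simp

lemma toOrderHom_last_eq_of_comp_eq {W : SimplexCategory} {u : ⦋b⦌ ⟶ W} {w : ⦋c⦌ ⟶ W}
    (huw : longEdgeMap b ≫ u = principalEdge c p ≫ w) :
    u.toOrderHom (Fin.last b) = w.toOrderHom p.succ := by
  have := congr(($huw).toOrderHom 1)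
  simp only [SimplexCategory.comp_toOrderHom, OrderHom.comp_coe, Function.comp_apply] at this
  convert this using 2 <;> ext <;> simp

variable (hd : c + b = d + 1)

def subdivisionDesc {W : SimplexCategory} (u : ⦋b⦌ ⟶ W) (w : ⦋c⦌ ⟶ W)
    (huw : longEdgeMap b ≫ u = principalEdge c p ≫ w) : ⦋d⦌ ⟶ W :=
  SimplexCategory.mkHom
    { toFun := fun t : Fin (d + 1) =>
        if h : t.1 ≤ p.1 then w.toOrderHom (⟨t, by omega⟩ : Fin (c + 1))
        else if h' : t.1 < p.1 + b then u.toOrderHom (⟨t - p, by omega⟩ : Fin (b + 1))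
        else w.toOrderHom (⟨t + 1 - b, by omega⟩ : Fin (c + 1))
      monotone' := by
        have hw := w.toOrderHom.monotone
        have hu := u.toOrderHom.monotone
        have hw_le_u : ∀ i j, i ≤ p.castSucc → w.toOrderHom i ≤ u.toOrderHom j := fun i j hi =>
          (hw hi).trans ((toOrderHom_zero_eq_of_comp_eq huw).symm.trans_le (hu (Fin.zero_le j)))
        have hu_le_w : ∀ i j, p.succ ≤ j → u.toOrderHom i ≤ w.toOrderHom j := fun i j hj =>
          (hu (Fin.le_last i)).trans ((toOrderHom_last_eq_of_comp_eq huw).trans_le (hw hj))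
        intro t t' htt'
        change t.1 ≤ t'.1 at htt'
        dsimp only
        split_ifs
        all_goals first
          | omega
          | exact hw (Fin.mk_le_mk.2 (by omega))
          | exact hu (Fin.mk_le_mk.2 (by omega))
          | exact hw_le_u _ _ (Fin.le_iff_val_le_val.2 (by simp; omega))
          | exact hu_le_w _ _ (Fin.le_iff_val_le_val.2 (by simp; omega)) }

lemma subdivisionDesc_apply {W : SimplexCategory} (u : ⦋b⦌ ⟶ W) (w : ⦋c⦌ ⟶ W)
    (huw : longEdgeMap b ≫ u = principalEdge c p ≫ w) (t : Fin (d + 1)) :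
    (subdivisionDesc hd u w huw).toOrderHom t =
      if h : t.1 ≤ p.1 then w.toOrderHom (⟨t, by omega⟩ : Fin (c + 1))
      else if h' : t.1 < p.1 + b then u.toOrderHom (⟨t - p, by omega⟩ : Fin (b + 1))
      else w.toOrderHom (⟨t + 1 - b, by omega⟩ : Fin (c + 1)) := rfl

/- `[d]` is `[c]` with its `p`-th edge subdivided into `b` edges (collapsed if `b = 0`), `h` is the
inclusion of these new edges and `k` that of `[c]`. -/
variable {h : ⦋b⦌ ⟶ ⦋d⦌} {k : ⦋c⦌ ⟶ ⦋d⦌}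
  (hh : ∀ j : Fin (b + 1), (h.toOrderHom j : ℕ) = p + j)
  (hk : ∀ i : Fin (c + 1), (k.toOrderHom i : ℕ) = if i.1 ≤ p.1 then (i : ℕ) else i + b - 1)

include hh in
lemma comp_subdivisionDesc_left {W : SimplexCategory} (u : ⦋b⦌ ⟶ W) (w : ⦋c⦌ ⟶ W)
    (huw : longEdgeMap b ≫ u = principalEdge c p ≫ w) :
    h ≫ subdivisionDesc hd u w huw = u := by
  ext j : 3
  rw [SimplexCategory.comp_toOrderHom, OrderHom.comp_coe, Function.comp_apply,
    subdivisionDesc_apply]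
  have hj := hh j
  split_ifs
  · convert (toOrderHom_zero_eq_of_comp_eq huw).symm using 2 <;> ext <;>
      simp only [Fin.val_zero, Fin.val_castSucc] <;> omega
  · exact congrArg _ (Fin.ext (by simp only; omega))
  · convert (toOrderHom_last_eq_of_comp_eq huw).symm using 2 <;> ext <;>
      simp only [Fin.val_last, Fin.val_succ] <;> omega

include hk in
lemma comp_subdivisionDesc_right {W : SimplexCategory} (u : ⦋b⦌ ⟶ W) (w : ⦋c⦌ ⟶ W)
    (huw : longEdgeMap b ≫ u = principalEdge c p ≫ w) :
    k ≫ subdivisionDesc hd u w huw = w := by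
  ext i : 3
  rw [SimplexCategory.comp_toOrderHom, OrderHom.comp_coe, Function.comp_apply,
    subdivisionDesc_apply]
  have hi := hk i
  split_ifs at hi ⊢
  · exact congrArg _ (Fin.ext hi)
  · -- `b = 0` and `i = p + 1`: the cocone identifies the two endpoints of the collapsed edge.
    obtain rfl : b = 0 := by omega
    convert (toOrderHom_zero_eq_of_comp_eq huw).symm.trans (toOrderHom_last_eq_of_comp_eq huw)
      using 2 <;> ext <;> simp only [Fin.val_castSucc, Fin.val_succ] <;> omega
  · omega
  · omega
  · omega
  · exact congrArg _ (Fin.ext (by simp only; omega))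

include hd hh hk

lemma mem_range_or_mem_range_of_subdivision (t : Fin (d + 1)) :
    t ∈ Set.range h.toOrderHom ∨ t ∈ Set.range k.toOrderHom := by
  by_cases htp : t.1 ≤ p.1
  · exact Or.inr ⟨(⟨t, by omega⟩ : Fin (c + 1)), Fin.ext (by rw [hk, if_pos htp])⟩
  by_cases htb : t.1 ≤ p.1 + b
  · exact Or.inl ⟨(⟨t - p, by omega⟩ : Fin (b + 1)), Fin.ext (by rw [hh]; simp only; omega)⟩
  · exact Or.inr ⟨(⟨t + 1 - b, by omega⟩ : Fin (c + 1)),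
      Fin.ext (by rw [hk, if_neg (by simp only; omega)]; simp only; omega)⟩

lemma hom_ext_of_subdivision {W : SimplexCategory} {φ ψ : ⦋d⦌ ⟶ W}
    (hφψ : h ≫ φ = h ≫ ψ) (hφψ' : k ≫ φ = k ≫ ψ) : φ = ψ := by
  ext t : 3
  rcases mem_range_or_mem_range_of_subdivision hd hh hk t with ⟨j, rfl⟩ | ⟨i, rfl⟩
  · exact congr(($hφψ).toOrderHom j)
  · exact congr(($hφψ').toOrderHom i)

theorem isPushout_longEdgeMap_principalEdge :
    IsPushout (longEdgeMap b) (principalEdge c p) h k := by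
  have comm : longEdgeMap b ≫ h = principalEdge c p ≫ k := by
    ext j : 4
    simp only [SimplexCategory.comp_toOrderHom, OrderHom.comp_coe, Function.comp_apply]
    rw [hh, hk]
    fin_cases j <;> simp
  refine IsPushout.of_isColimit (PushoutCocone.IsColimit.mk comm
    (fun s => subdivisionDesc hd s.inl s.inr s.condition)
    (fun s => comp_subdivisionDesc_left hd hh _ _ _)
    (fun s => comp_subdivisionDesc_right hd hk _ _ _) fun s φ hφ hφ' => ?_)
  apply hom_ext_of_subdivision hd hh hk
  · rw [hφ, comp_subdivisionDesc_left hd hh]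
  · rw [hφ', comp_subdivisionDesc_right hd hk]

end EdgeSubdivision

lemma isPushout_midMap_one (m : ℕ) :
    IsPushout (longEdgeMap m) (principalEdge 2 0) (freeInitial m 1) (midMap m 1) :=
  isPushout_longEdgeMap_principalEdge (by omega) (fun j => by simp)
    (fun i => by fin_cases i <;> simp [add_comm])

lemma isPushout_subdivideEdge_last (m n : ℕ) :
    IsPushout (longEdgeMap n) (principalEdge (m + 1) (Fin.last m)) (freeFinal m n)
      (subdivideEdge (Fin.last m) (by omega : m + 1 + n = m + n + 1)) :=
  isPushout_longEdgeMap_principalEdge (by omega) (fun j => by simp) (fun i => rfl)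

lemma δ_two_eq_principalEdge : SimplexCategory.δ (2 : Fin 3) = principalEdge 2 0 := by
  ext i; fin_cases i <;> rfl

lemma principalEdge_last_eq_δ_zero_comp_midMap (m : ℕ) :
    principalEdge (m + 1) (Fin.last m) = SimplexCategory.δ 0 ≫ midMap m 1 := by
  ext i : 4; fin_cases i <;> simp [SimplexCategory.δ, Fin.succAbove]

lemma midMap_one_comp_subdivideEdge (m n : ℕ) :
    midMap m 1 ≫ subdivideEdge (Fin.last m) (by omega : m + 1 + n = m + n + 1) = midMap m n := by
  ext i : 4; fin_cases i <;> simp [subdivideEdge]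

lemma freeInitial_one_comp_subdivideEdge (m n : ℕ) :
    freeInitial m 1 ≫ subdivideEdge (Fin.last m) (by omega : m + 1 + n = m + n + 1) =
      freeInitial m n := by
  ext i : 4; simp [subdivideEdge, i.is_le]

lemma δ_two_comp_midMap (m n : ℕ) :
    SimplexCategory.δ 2 ≫ midMap m n = longEdgeMap m ≫ freeInitial m n := by
  ext i : 4; fin_cases i <;> simp [SimplexCategory.δ, Fin.succAbove]

lemma δ_zero_comp_midMap (m n : ℕ) :
    SimplexCategory.δ 0 ≫ midMap m n = longEdgeMap n ≫ freeFinal m n := by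
  ext i : 4; fin_cases i <;> simp [SimplexCategory.δ, Fin.succAbove]

lemma principalEdge_comp_freeInitial (m n : ℕ) (i : Fin m) :
    principalEdge m i ≫ freeInitial m n = principalEdge (m + n) (Fin.castAdd n i) := by
  ext j : 4; simp

lemma principalEdge_comp_freeFinal (m n : ℕ) (i : Fin n) :
    principalEdge n i ≫ freeFinal m n = principalEdge (m + n) (Fin.natAdd m i) := by
  ext j : 4; simp; omega

lemma δ_two_map_midMap (X : SSet) {m n : ℕ} (σ : X _⦋m + n⦌) :
    X.δ 2 (X.map (midMap m n).op σ) = X.map (longEdgeMap m).op (X.map (freeInitial m n).op σ) := by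
  rw [← map_op_comp_apply, ← δ_two_comp_midMap, map_op_comp_apply]
  rfl

lemma δ_zero_map_midMap (X : SSet) {m n : ℕ} (σ : X _⦋m + n⦌) :
    X.δ 0 (X.map (midMap m n).op σ) = X.map (longEdgeMap n).op (X.map (freeFinal m n).op σ) := by
  rw [← map_op_comp_apply, ← δ_zero_comp_midMap, map_op_comp_apply]
  rfl

lemma IsDecomposition.existsUnique_of_longEdge {X : SSet} (hX : IsDecomposition X) {m n : ℕ}
    {τ : X _⦋2⦌} {ρ : X _⦋m⦌} {ρ' : X _⦋n⦌}
    (h₂ : X.δ 2 τ = X.map (longEdgeMap m).op ρ) (h₀ : X.δ 0 τ = X.map (longEdgeMap n).op ρ') :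
    ∃! σ : X _⦋m + n⦌, X.map (midMap m n).op σ = τ ∧
      X.map (freeInitial m n).op σ = ρ ∧ X.map (freeFinal m n).op σ = ρ' := by
  have pb₁ := hX _ _ _ _ (isGeneric_longEdgeMap m) (isFree_principalEdge 2 0)
    (isPushout_midMap_one m)
  have pb₂ := hX _ _ _ _ (isGeneric_longEdgeMap n) (isFree_principalEdge _ _)
    (isPushout_subdivideEdge_last m n)
  obtain ⟨π, ⟨hπρ, hπτ⟩, hπ⟩ := Types.existsUnique_of_isPullback pb₁
    (a := ρ) (b := τ) (by rw [← δ_two_eq_principalEdge, ← h₂]; rfl)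
  obtain ⟨σ, ⟨hσρ', hσπ⟩, hσ⟩ := Types.existsUnique_of_isPullback pb₂ (a := ρ') (b := π) (by
    rw [principalEdge_last_eq_δ_zero_comp_midMap, map_op_comp_apply]
    exact h₀.symm.trans congr(X.δ 0 $hπτ).symm)
  refine ⟨σ, ⟨?_, ?_, hσρ'⟩, fun σ' ⟨hσ'τ, hσ'ρ, hσ'ρ'⟩ => hσ σ' ⟨hσ'ρ', hπ _ ⟨?_, ?_⟩⟩⟩
  · rw [← midMap_one_comp_subdivideEdge m n, map_op_comp_apply, hσπ, hπτ]
  · rw [← freeInitial_one_comp_subdivideEdge m n, map_op_comp_apply, hσπ, hπρ]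
  · rw [← map_op_comp_apply, freeInitial_one_comp_subdivideEdge, hσ'ρ]
  · rw [← map_op_comp_apply, midMap_one_comp_subdivideEdge, hσ'τ]

@[simp]
lemma concatW_castAdd {m n : ℕ} (v : Fin m → Letter) (v' : Fin n → Letter) (i : Fin m) :
    concatW v v' (Fin.castAdd n i) = v i := by
  simp [concatW]

@[simp]
lemma concatW_natAdd {m n : ℕ} (v : Fin m → Letter) (v' : Fin n → Letter) (i : Fin n) :
    concatW v v' (Fin.natAdd m i) = v' i := by
  simp [concatW]

lemma mem_wordSet_concatW_iff (X : SSet) {m n : ℕ} (v : Fin m → Letter) (v' : Fin n → Letter)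
    (σ : X _⦋m + n⦌) :
    σ ∈ wordSet X (concatW v v') ↔
      X.map (freeInitial m n).op σ ∈ wordSet X v ∧ X.map (freeFinal m n).op σ ∈ wordSet X v' := by
  simp only [wordSet, Set.mem_ofPred_eq, ← map_op_comp_apply, principalEdge_comp_freeInitial,
    principalEdge_comp_freeFinal, Fin.forall_fin_add, concatW_castAdd, concatW_natAdd]

theorem statement6_general (X : SSet) (hX : IsDecomposition X)
    (m n : ℕ) (v : Fin m → Letter) (v' : Fin n → Letter) :
    (∀ σ ∈ wordSet X (concatW v v'),
      X.map (freeInitial m n).op σ ∈ wordSet X v ∧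
      X.map (freeFinal m n).op σ ∈ wordSet X v' ∧
      X.δ (2 : Fin 3) (X.map (midMap m n).op σ)
        = X.map (longEdgeMap m).op (X.map (freeInitial m n).op σ) ∧
      X.δ (0 : Fin 3) (X.map (midMap m n).op σ)
        = X.map (longEdgeMap n).op (X.map (freeFinal m n).op σ)) ∧
    (∀ (τ : X _⦋2⦌) (ρ : X _⦋m⦌) (ρ' : X _⦋n⦌),
      ρ ∈ wordSet X v → ρ' ∈ wordSet X v' →
      X.δ (2 : Fin 3) τ = X.map (longEdgeMap m).op ρ →
      X.δ (0 : Fin 3) τ = X.map (longEdgeMap n).op ρ' →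
      ∃! σ : X _⦋m + n⦌, σ ∈ wordSet X (concatW v v') ∧
        X.map (midMap m n).op σ = τ ∧
        X.map (freeInitial m n).op σ = ρ ∧ X.map (freeFinal m n).op σ = ρ') := by
  refine ⟨fun σ hσ => ?_, fun τ ρ ρ' hρ hρ' h₂ h₀ => ?_⟩
  · obtain ⟨hv, hv'⟩ := (mem_wordSet_concatW_iff X v v' σ).1 hσ
    exact ⟨hv, hv', δ_two_map_midMap X σ, δ_zero_map_midMap X σ⟩
  · obtain ⟨σ, ⟨hστ, hσρ, hσρ'⟩, hσ⟩ := hX.existsUnique_of_longEdge h₂ h₀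
    refine ⟨σ, ⟨?_, hστ, hσρ, hσρ'⟩, fun σ' hσ' => hσ σ' hσ'.2⟩
    exact (mem_wordSet_concatW_iff X v v' σ).2 ⟨hσρ ▸ hρ, hσρ' ▸ hρ'⟩

theorem statement6 (X : SSet) (hX : IsDecomposition X)
    (hc : Function.Injective (X.σ (0 : Fin 1) : X _⦋0⦌ ⟶ X _⦋1⦌))
    (m n : ℕ) (v : Fin m → Letter) (v' : Fin n → Letter) :
    (∀ σ ∈ wordSet X (concatW v v'),
      X.map (freeInitial m n).op σ ∈ wordSet X v ∧
      X.map (freeFinal m n).op σ ∈ wordSet X v' ∧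
      X.δ (2 : Fin 3) (X.map (midMap m n).op σ)
        = X.map (longEdgeMap m).op (X.map (freeInitial m n).op σ) ∧
      X.δ (0 : Fin 3) (X.map (midMap m n).op σ)
        = X.map (longEdgeMap n).op (X.map (freeFinal m n).op σ)) ∧
    (∀ (τ : X _⦋2⦌) (ρ : X _⦋m⦌) (ρ' : X _⦋n⦌),
      ρ ∈ wordSet X v → ρ' ∈ wordSet X v' →
      X.δ (2 : Fin 3) τ = X.map (longEdgeMap m).op ρ →
      X.δ (0 : Fin 3) τ = X.map (longEdgeMap n).op ρ' →
      ∃! σ : X _⦋m + n⦌, σ ∈ wordSet X (concatW v v') ∧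
        X.map (midMap m n).op σ = τ ∧
        X.map (freeInitial m n).op σ = ρ ∧ X.map (freeFinal m n).op σ = ρ') :=
  statement6_general X hX m n v v'
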